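/- arXiv:math/0511068 — 4 statements merged into one kernel-verified Lean document; each statement's English description precedes it below -/
import Mathlib

section
/- Let A and B be unital pro-C*-algebras and let φ : A → B be a unital *-algebra homomorphism (no continuity assumed). Then φ maps bounded elements to bounded elements: for every a ∈ A with ‖a‖_∞ < ∞ one has ‖φ(a)‖_∞ ≤ ‖a‖_∞; in particular φ(A_b) ⊆ B_b. -/
open scoped ENNReal

def IsCStarSeminorm {A : Type*} [Ring A] [StarRing A] [Algebra ℂ A] (p : A → ℝ) : Prop :=
  (∀ a, 0 ≤ p a) ∧ (∀ a b, p (a + b) ≤ p a + p b) ∧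
    (∀ (c : ℂ) (a : A), p (c • a) = ‖c‖ * p a) ∧
    (∀ a b, p (a * b) ≤ p a * p b) ∧ (∀ a, p (star a * a) = p a ^ 2)

def contCStarSeminorms (A : Type*) [TopologicalSpace A] [Ring A] [StarRing A] [Algebra ℂ A] :
    Set (A → ℝ) :=
  {p | IsCStarSeminorm p ∧ Continuous p}

class ProCStarAlgebra (A : Type*) [UniformSpace A] [Ring A] [StarRing A] [Algebra ℂ A] :
    Prop where
  t2 : T2Space A
  complete : CompleteSpace A
  topologicalRing : IsTopologicalRing A
  continuousStar : ContinuousStar A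
  uniformAddGroup : IsUniformAddGroup A
  mem_nhds_zero : ∀ s : Set A, s ∈ nhds (0 : A) ↔
    ∃ p ∈ contCStarSeminorms A, ∃ ε : ℝ, 0 < ε ∧ {a : A | p a < ε} ⊆ s

noncomputable def uniformNorm (A : Type*) [UniformSpace A] [Ring A] [StarRing A] [Algebra ℂ A]
    (a : A) : ℝ≥0∞ :=
  ⨆ p ∈ contCStarSeminorms A, ENNReal.ofReal (p a)

def boundedElems (A : Type*) [UniformSpace A] [Ring A] [StarRing A] [Algebra ℂ A] : Set A :=
  {a | uniformNorm A a < ⊤}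

def expSet (A : Type*) [UniformSpace A] [Ring A] [StarRing A] [Algebra ℂ A] : Set A :=
  {w | ∃ (n : ℕ) (a e : Fin n → A),
    (∀ j, star (a j) = a j) ∧
    (∀ j, HasSum (fun k : ℕ => ((Complex.I ^ k / (k.factorial : ℂ)) • a j ^ k)) (e j)) ∧
    w = (List.ofFn e).prod}


/-!
For bounded `a` put `t = ‖a‖_∞` and `H = star a * a`, so that `p H ≤ t ^ 2` for every continuous
C*-seminorm `p` on `A`. Completeness of `A` makes the Neumann series of `z⁻¹ • H` converge when
`t ^ 2 < ‖z‖`, so the spectrum of `H` lies in the closed disc of radius `t ^ 2`; a unital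
homomorphism only shrinks spectra, so the same holds for `φ H`. For a C*-seminorm `q` on `B`, the
self-adjoint element `φ H` satisfies `q (φ H ^ 2 ^ k) = q (φ H) ^ 2 ^ k`, and Gelfand's formula in
the completion of `(B, q)` turns this into `q (φ H) ≤ t ^ 2`, i.e. `q (φ a) ≤ t`.
-/

open Filter Topology

namespace IsCStarSeminorm

variable {A : Type*} [Ring A] [StarRing A] [Algebra ℂ A] {p : A → ℝ}

lemma nonneg (hp : IsCStarSeminorm p) (a : A) : 0 ≤ p a := hp.1 a

lemma map_smul (hp : IsCStarSeminorm p) (c : ℂ) (a : A) : p (c • a) = ‖c‖ * p a := hp.2.2.1 c a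

lemma map_star_mul_self (hp : IsCStarSeminorm p) (a : A) : p (star a * a) = p a ^ 2 :=
  hp.2.2.2.2 a

lemma map_zero (hp : IsCStarSeminorm p) : p 0 = 0 := by
  simpa using hp.map_smul 0 0

def toRingSeminorm (hp : IsCStarSeminorm p) : RingSeminorm A where
  toFun := p
  map_zero' := hp.map_zero
  add_le' := hp.2.1
  neg' a := by simpa using hp.map_smul (-1) a
  mul_le' := hp.2.2.2.1

lemma map_one_le (hp : IsCStarSeminorm p) : p 1 ≤ 1 := by
  have h := hp.map_star_mul_self 1
  rw [star_one, one_mul] at h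
  nlinarith [hp.nonneg 1]

lemma map_pow_le (hp : IsCStarSeminorm p) (a : A) : ∀ n : ℕ, p (a ^ n) ≤ p a ^ n
  | 0 => by simpa using hp.map_one_le
  | n + 1 => map_pow_le_pow hp.toRingSeminorm a n.succ_ne_zero

lemma map_sum_le (hp : IsCStarSeminorm p) {ι : Type*} (s : Finset ι) (f : ι → A) :
    p (∑ i ∈ s, f i) ≤ ∑ i ∈ s, p (f i) :=
  Finset.le_sum_of_subadditive p hp.map_zero.le hp.2.1 s f

lemma map_pow_two_pow (hp : IsCStarSeminorm p) {a : A} (ha : IsSelfAdjoint a) (k : ℕ) :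
    p (a ^ 2 ^ k) = p a ^ 2 ^ k := by
  induction k with
  | zero => simp
  | succ k ih =>
    calc p (a ^ 2 ^ (k + 1)) = p (star (a ^ 2 ^ k) * a ^ 2 ^ k) := by
          rw [(ha.pow _).star_eq, ← pow_add, ← two_mul, pow_succ']
      _ = p a ^ 2 ^ (k + 1) := by rw [hp.map_star_mul_self, ih, ← pow_mul, ← pow_succ]

end IsCStarSeminorm

section ProCStarAlgebra

variable {A : Type*} [UniformSpace A] [Ring A] [StarRing A] [Algebra ℂ A] [ProCStarAlgebra A]

theorem tendsto_zero_of_forall_le {ι : Type*} {l : Filter ι} {f : ι → A} {b : ι → ℝ}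
    (hb : Tendsto b l (𝓝 0)) (hf : ∀ p ∈ contCStarSeminorms A, ∀ i, p (f i) ≤ b i) :
    Tendsto f l (𝓝 0) := by
  intro U hU
  obtain ⟨p, hp, ε, hε, hsub⟩ := (ProCStarAlgebra.mem_nhds_zero U).mp hU
  exact (hb.eventually_lt_const hε).mono fun i hi => hsub ((hf p hp i).trans_lt hi)

theorem summable_of_forall_le {ι : Type*} {f : ι → A} {b : ι → ℝ} (hb : Summable b)
    (hf : ∀ p ∈ contCStarSeminorms A, ∀ i, p (f i) ≤ b i) : Summable f := by
  have := ProCStarAlgebra.complete (A := A)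
  have := ProCStarAlgebra.uniformAddGroup (A := A)
  refine summable_iff_vanishing.2 fun U hU => ?_
  obtain ⟨p, hp, ε, hε, hsub⟩ := (ProCStarAlgebra.mem_nhds_zero U).mp hU
  obtain ⟨s, hs⟩ := hb.vanishing (Iio_mem_nhds hε)
  refine ⟨s, fun t ht => hsub ?_⟩
  calc p (∑ i ∈ t, f i) ≤ ∑ i ∈ t, p (f i) := hp.1.map_sum_le t f
    _ ≤ ∑ i ∈ t, b i := Finset.sum_le_sum fun i _ => hf p hp i
    _ < ε := hs t ht

theorem isUnit_one_sub_of_forall_le {x : A} {s : ℝ} (hs₀ : 0 ≤ s) (hs₁ : s < 1)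
    (hx : ∀ p ∈ contCStarSeminorms A, p x ≤ s) : IsUnit (1 - x) := by
  have := ProCStarAlgebra.t2 (A := A)
  have := ProCStarAlgebra.topologicalRing (A := A)
  have hpow : ∀ p ∈ contCStarSeminorms A, ∀ n, p (x ^ n) ≤ s ^ n := fun p hp n =>
    (hp.1.map_pow_le x n).trans (pow_le_pow_left₀ (hp.1.nonneg x) (hx p hp) n)
  have hsum : HasSum (fun n => x ^ n) (∑' n, x ^ n) :=
    (summable_of_forall_le (summable_geometric_of_lt_one hs₀ hs₁) hpow).hasSum
  have hrem : Tendsto (fun n => 1 - x ^ n) atTop (𝓝 1) := by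
    simpa using tendsto_const_nhds.sub
      (tendsto_zero_of_forall_le (tendsto_pow_atTop_nhds_zero_of_lt_one hs₀ hs₁) hpow)
  refine ⟨⟨1 - x, ∑' n, x ^ n, ?_, ?_⟩, rfl⟩
  · refine tendsto_nhds_unique ?_ hrem
    simpa only [mul_neg_geom_sum] using hsum.tendsto_sum_nat.const_mul (1 - x)
  · refine tendsto_nhds_unique ?_ hrem
    simpa only [geom_sum_mul_neg] using hsum.tendsto_sum_nat.mul_const (1 - x)

theorem norm_le_of_mem_spectrum_of_forall_le {a : A} {s : ℝ} (hs : 0 ≤ s)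
    (ha : ∀ p ∈ contCStarSeminorms A, p a ≤ s) {z : ℂ} (hz : z ∈ spectrum ℂ a) : ‖z‖ ≤ s := by
  by_contra! hlt
  have hz₀ : 0 < ‖z‖ := hs.trans_lt hlt
  have hunit : IsUnit (1 - z⁻¹ • a) :=
    isUnit_one_sub_of_forall_le (s := s / ‖z‖) (by positivity) ((div_lt_one hz₀).2 hlt)
      fun p hp => by
        rw [hp.1.map_smul, norm_inv, inv_mul_eq_div]
        gcongr
        exact ha p hp
  have hfactor : algebraMap ℂ A z - a = algebraMap ℂ A z * (1 - z⁻¹ • a) := by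
    simp [mul_sub, Algebra.smul_def, ← mul_assoc, ← map_mul, norm_pos_iff.1 hz₀]
  refine spectrum.mem_iff.1 hz ?_
  rw [hfactor]
  exact ((Units.mk0 z (norm_pos_iff.1 hz₀)).isUnit.map (algebraMap ℂ A)).mul hunit

end ProCStarAlgebra

theorem spectralRadius_eq_nnnorm_of_nnnorm_pow_two_pow {A : Type*} [NormedRing A]
    [NormedAlgebra ℂ A] [CompleteSpace A] {a : A} (ha : ∀ k : ℕ, ‖a ^ 2 ^ k‖₊ = ‖a‖₊ ^ 2 ^ k) :
    spectralRadius ℂ a = ‖a‖₊ := by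
  refine tendsto_nhds_unique ?_ (tendsto_const_nhds (f := atTop (α := ℕ)))
  convert!
    (spectrum.pow_nnnorm_pow_one_div_tendsto_nhds_spectralRadius a).comp
      (tendsto_pow_atTop_atTop_of_one_lt one_lt_two) using 1
  refine funext fun k => ?_
  rw [Function.comp_apply, ha, ENNReal.coe_pow, ← ENNReal.rpow_natCast, ← ENNReal.rpow_mul]
  simp

-- Mathlib provides this instance only for commutative `R`.
noncomputable instance UniformSpace.Completion.instNormedAlgebraOfSeminormedRing
    {𝕜 R : Type*} [NormedField 𝕜] [SeminormedRing R] [NormedAlgebra 𝕜 R] :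
    NormedAlgebra 𝕜 (UniformSpace.Completion R) where
  norm_smul_le := norm_smul_le

open UniformSpace in
theorem norm_le_of_forall_mem_spectrum {R : Type*} [SeminormedRing R] [NormedAlgebra ℂ R] {h : R}
    (hpow : ∀ k : ℕ, ‖h ^ 2 ^ k‖ = ‖h‖ ^ 2 ^ k) {s : ℝ} (hs : 0 ≤ s)
    (hspec : ∀ z ∈ spectrum ℂ h, ‖z‖ ≤ s) : ‖h‖ ≤ s := by
  let ι : R →ₐ[ℂ] Completion R :=
    { Completion.coeRingHom with commutes' := fun z => (Completion.algebraMap_def R ℂ z).symm }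
  have hι : ∀ x, ‖ι x‖₊ = ‖x‖₊ := fun x => NNReal.eq (Completion.norm_coe x)
  have hrad : spectralRadius ℂ (ι h) ≤ ENNReal.ofReal s :=
    iSup₂_le fun z hz => by
      simpa [← ENNReal.ofReal_coe_nnreal] using
        ENNReal.ofReal_le_ofReal (hspec z (AlgHom.spectrum_apply_subset ι h hz))
  rw [spectralRadius_eq_nnnorm_of_nnnorm_pow_two_pow fun k => ?_] at hrad
  · rwa [hι, ← ENNReal.ofReal_coe_nnreal, coe_nnnorm, ENNReal.ofReal_le_ofReal_iff hs] at hrad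
  · rw [← map_pow, hι, hι]
    exact NNReal.eq (by simpa using hpow k)

theorem IsCStarSeminorm.le_of_forall_mem_spectrum {B : Type*} [Ring B] [StarRing B]
    [Algebra ℂ B] {q : B → ℝ} (hq : IsCStarSeminorm q) {h : B} (hh : IsSelfAdjoint h) {s : ℝ}
    (hs : 0 ≤ s) (hspec : ∀ z ∈ spectrum ℂ h, ‖z‖ ≤ s) : q h ≤ s := by
  -- `B` carries no topology in this statement, so `q` may serve as its norm.
  let : SeminormedRing B := hq.toRingSeminorm.toSeminormedRing
  let : NormedAlgebra ℂ B := { norm_smul_le := fun c x => (hq.map_smul c x).le }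
  exact norm_le_of_forall_mem_spectrum (hq.map_pow_two_pow hh) hs hspec

theorem IsCStarSeminorm.map_le_of_forall_le {A B : Type*} [UniformSpace A] [Ring A] [StarRing A]
    [Algebra ℂ A] [ProCStarAlgebra A] [Ring B] [StarRing B] [Algebra ℂ B] {q : B → ℝ}
    (hq : IsCStarSeminorm q) (φ : A →⋆ₐ[ℂ] B) {a : A} {t : ℝ} (ht : 0 ≤ t)
    (ha : ∀ p ∈ contCStarSeminorms A, p a ≤ t) : q (φ a) ≤ t := by
  have hH : ∀ p ∈ contCStarSeminorms A, p (star a * a) ≤ t ^ 2 := fun p hp => by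
    rw [hp.1.map_star_mul_self]
    exact pow_le_pow_left₀ (hp.1.nonneg a) (ha p hp) 2
  have hφH : q (φ (star a * a)) ≤ t ^ 2 :=
    hq.le_of_forall_mem_spectrum ((IsSelfAdjoint.star_mul_self a).map φ) (by positivity)
      fun z hz => norm_le_of_mem_spectrum_of_forall_le (by positivity) hH
        (AlgHom.spectrum_apply_subset φ _ hz)
  rw [map_mul, map_star, hq.map_star_mul_self] at hφH
  exact (pow_le_pow_iff_left₀ (hq.nonneg _) ht two_ne_zero).1 hφH

theorem le_toReal_uniformNorm {A : Type*} [UniformSpace A] [Ring A] [StarRing A] [Algebra ℂ A]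
    {a : A} (ha : uniformNorm A a ≠ ⊤) {p : A → ℝ} (hp : p ∈ contCStarSeminorms A) :
    p a ≤ (uniformNorm A a).toReal :=
  (ENNReal.ofReal_le_iff_le_toReal ha).1 <|
    le_iSup₂ (f := fun p (_ : p ∈ contCStarSeminorms A) => ENNReal.ofReal (p a)) p hp

theorem stmt5_general {A B : Type*}
    [UniformSpace A] [Ring A] [StarRing A] [Algebra ℂ A] [ProCStarAlgebra A]
    [UniformSpace B] [Ring B] [StarRing B] [Algebra ℂ B]
    (φ : A →⋆ₐ[ℂ] B) :
    (∀ a : A, uniformNorm A a < ⊤ → uniformNorm B (φ a) ≤ uniformNorm A a) ∧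
    φ '' boundedElems A ⊆ boundedElems B := by
  have hle : ∀ a : A, uniformNorm A a < ⊤ → uniformNorm B (φ a) ≤ uniformNorm A a := by
    intro a ha
    rw [← ENNReal.ofReal_toReal ha.ne]
    exact iSup₂_le fun q hq => ENNReal.ofReal_le_ofReal <|
      hq.1.map_le_of_forall_le φ ENNReal.toReal_nonneg fun p hp => le_toReal_uniformNorm ha.ne hp
  refine ⟨hle, ?_⟩
  rintro _ ⟨a, ha, rfl⟩
  exact (hle a ha).trans_lt ha

/-- A (not necessarily continuous) unital *-algebra homomorphism
`φ : A → B` between unital pro-C*-algebras maps bounded elements to bounded elements: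
`‖φ a‖_∞ ≤ ‖a‖_∞` whenever `‖a‖_∞ < ∞`; in particular `φ(A_b) ⊆ B_b`. -/
theorem stmt5 {A B : Type*}
    [UniformSpace A] [Ring A] [StarRing A] [Algebra ℂ A] [ProCStarAlgebra A]
    [UniformSpace B] [Ring B] [StarRing B] [Algebra ℂ B] [ProCStarAlgebra B]
    (φ : A →⋆ₐ[ℂ] B) :
    (∀ a : A, uniformNorm A a < ⊤ → uniformNorm B (φ a) ≤ uniformNorm A a) ∧
    φ '' boundedElems A ⊆ boundedElems B :=
  stmt5_general φ
end

section
/- For every n ≥ 1, let L ∈ M_{n+1}(ℂ) be the matrix whose only nonzero entries are L_{j, j+1} = j for 1 ≤ j ≤ n (indices 1, …, n+1). Then L is nilpotent, so sp(L) = {0}; and the spectral radius of L L* satisfies r(L L*) ≥ n², equivalently n ≤ √(r(L L*)). (Here L* denotes the conjugate transpose.) -/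
open scoped ENNReal Matrix

/-- For `n ≥ 1`, let `L ∈ M_{n+1}(ℂ)` be the matrix whose only nonzero
entries are `L_{j, j+1} = j` for `1 ≤ j ≤ n` (with `Fin (n+1)` indexing, `L i (i+1) = i+1`
for `0 ≤ i ≤ n-1`).  Then `L` is nilpotent, so `sp(L) = {0}`, and the spectral radius of
`L * Lᴴ` satisfies `r(L Lᴴ) ≥ n²`, i.e. `n ≤ √(r(L Lᴴ))`. -/
theorem stmt14 (n : ℕ) (hn : 1 ≤ n)
    (L : Matrix (Fin (n + 1)) (Fin (n + 1)) ℂ)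
    (hL : ∀ i j : Fin (n + 1),
      L i j = if (j : ℕ) = (i : ℕ) + 1 then ((i : ℕ) + 1 : ℂ) else 0) :
    IsNilpotent L ∧ spectrum ℂ L = {0} ∧
    ((n : ℝ≥0∞) ^ 2 ≤ spectralRadius ℂ (L * Lᴴ)) := by
  have hzero : ∀ i j : Fin (n + 1), (j : ℕ) ≤ (i : ℕ) → L i j = 0 := by
    intro i j h
    rw [hL, if_neg (by omega)]
  -- powers of L vanish strictly below the k-th superdiagonal
  have hpow : ∀ k : ℕ, ∀ i j : Fin (n + 1), (j : ℕ) < (i : ℕ) + k → (L ^ k) i j = 0 := by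
    intro k
    induction k with
    | zero =>
      intro i j h
      simp only [pow_zero]
      exact Matrix.one_apply_ne (by omega : i ≠ j)
    | succ k ih =>
      intro i j h
      rw [pow_succ, Matrix.mul_apply]
      apply Finset.sum_eq_zero
      intro m _
      by_cases hm : (m : ℕ) < (i : ℕ) + k
      · rw [ih i m hm, zero_mul]
      · rw [hzero m j (by omega), mul_zero]
  have hnil : IsNilpotent L := by
    refine ⟨n + 1, ?_⟩
    ext i j
    rw [hpow (n + 1) i j (by omega)]
    rfl
  refine ⟨hnil, ?_, ?_⟩
  · -- spectrum = {0}
    ext μ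
    simp only [Set.mem_singleton_iff, spectrum.mem_iff]
    constructor
    · intro h
      by_contra hμ
      exact h <| by
        have hcomm : Commute (-L) (algebraMap ℂ (Matrix (Fin (n + 1)) (Fin (n + 1)) ℂ) μ) :=
          (Algebra.commutes μ (-L)).symm
        have := hnil.neg.isUnit_add_left_of_commute
          ((algebraMap ℂ _).isUnit_map (isUnit_iff_ne_zero.mpr hμ)) hcomm
        rwa [sub_eq_add_neg]
    · rintro rfl
      simp only [map_zero, zero_sub]
      intro h
      exact hnil.not_isUnit (by simpa using h.neg)
  · -- spectral radius bound
    have hlt : n - 1 < n + 1 := by omega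
    have hltn : n < n + 1 := by omega
    set i₀ : Fin (n + 1) := ⟨n - 1, hlt⟩ with hi₀
    set k₀ : Fin (n + 1) := ⟨n, hltn⟩ with hk₀
    have hi₀v : (i₀ : ℕ) = n - 1 := rfl
    have hk₀v : (k₀ : ℕ) = n := rfl
    have hLi₀ : ∀ k : Fin (n + 1), L i₀ k = if (k : ℕ) = n then (n : ℂ) else 0 := by
      intro k
      rw [hL]
      have h1 : (i₀ : ℕ) + 1 = n := by omega
      rw [h1]
      by_cases hk : (k : ℕ) = n
      · rw [if_pos hk, if_pos hk, hi₀v]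
        exact_mod_cast congrArg (Nat.cast : ℕ → ℂ) (by omega : n - 1 + 1 = n)
      · rw [if_neg hk, if_neg hk]
    -- the row i₀ of the matrix (n² • 1 - L Lᴴ) is zero
    have hrow : ∀ j : Fin (n + 1),
        (algebraMap ℂ (Matrix (Fin (n + 1)) (Fin (n + 1)) ℂ) ((n : ℂ) ^ 2) - L * Lᴴ) i₀ j = 0 := by
      intro j
      have hprod : (L * Lᴴ) i₀ j = if j = i₀ then (n : ℂ) ^ 2 else 0 := by
        rw [Matrix.mul_apply]
        rw [Finset.sum_eq_single k₀]
        · rw [hLi₀, if_pos rfl, Matrix.conjTranspose_apply, hL]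
          by_cases hj : j = i₀
          · subst hj
            rw [if_pos (by omega), if_pos rfl]
            have h2 : ((i₀ : ℕ) : ℂ) + 1 = (n : ℂ) := by
              rw [hi₀v]
              exact_mod_cast congrArg (Nat.cast : ℕ → ℂ) (by omega : n - 1 + 1 = n)
            rw [h2]
            simp [sq, Complex.star_def, Complex.conj_natCast]
          · have hj' : (j : ℕ) ≠ n - 1 := fun h => hj (Fin.ext (by rw [h, hi₀v]))
            have hjlt := j.isLt
            rw [if_neg hj, if_neg (by omega)]
            simp
        · intro k _ hk
          rw [hLi₀, if_neg (fun h => hk (Fin.ext (by rw [h, hk₀v]))), zero_mul]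
        · intro h
          exact absurd (Finset.mem_univ k₀) h
      rw [Matrix.sub_apply, hprod, Matrix.algebraMap_matrix_apply]
      by_cases hj : j = i₀
      · subst hj; simp
      · rw [if_neg (fun h => hj h.symm), if_neg hj, sub_zero]
    have hmem : ((n : ℂ) ^ 2) ∈ spectrum ℂ (L * Lᴴ) := by
      rw [spectrum.mem_iff]
      intro h
      rw [Matrix.isUnit_iff_isUnit_det, isUnit_iff_ne_zero] at h
      exact h (Matrix.det_eq_zero_of_row_eq_zero i₀ hrow)
    calc ((n : ℝ≥0∞) ^ 2) = (‖(n : ℂ) ^ 2‖₊ : ℝ≥0∞) := by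
          simp [nnnorm_pow]
      _ ≤ spectralRadius ℂ (L * Lᴴ) := le_iSup₂ (α := ℝ≥0∞) _ hmem
end

section
/- Let X be a Tychonoff (completely regular Hausdorff) topological space and let 𝓕 be a family of compact subsets of X with ⋃𝓕 = X, such that every function f : X → ℝ (equivalently, → ℂ) whose restriction to each member of 𝓕 is continuous is continuous on X (i.e. 𝓕 is strongly functionally generating). Equip the commutative unital *-algebra C(X, ℂ) of continuous complex-valued functions on X with the topology of uniform convergence on the members of 𝓕, given by the seminorms p_F(f) = sup_{x ∈ F} |f(x)| for F ∈ 𝓕. Then the evaluation map X → Δ(C(X,ℂ)), x ↦ (f ↦ f(x)), is a homeomorphism of X onto the space Δ(C(X,ℂ)) of nonzero continuous algebra homomorphisms C(X,ℂ) → ℂ, equipped with the topology of pointwise convergence (weak-* topology). -/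
/-! Evaluation at `x` is a character, dominated by `p_F` for any `F ∈ 𝓕` containing `x`.
Conversely a character `χ` is dominated by `p_{F₁} ⊔ … ⊔ p_{Fₗ}`, so it kills every function
vanishing on the compact set `K = F₁ ∪ … ∪ Fₗ`. If `χ` were evaluation at no point of `K`, its
kernel would have no common zero on `K`; by compactness finitely many `fᵢ ∈ ker χ` have none, so
`∑ |fᵢ|²` is bounded below on `K` and a multiple of it lies in `ker χ` and equals `1` on `K`,
forcing `χ 1 = 0`. Finally, complete regularity says that `X` carries the weak topology induced
by `C(X, ℂ)`, so evaluation is an embedding (injective by the T₁ axiom). -/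

open scoped ENNReal

/-- The sup-seminorm `p_F(f) = sup_{x ∈ F} |f x|` on `C(X, ℂ)` associated with a subset
`F ⊆ X`. -/
noncomputable def supSeminorm {X : Type*} [TopologicalSpace X] (F : Set X)
    (f : C(X, ℂ)) : ℝ :=
  ⨆ x ∈ F, ‖f x‖

/-- The character space `Δ(C_𝓕(X))` of the algebra `C(X, ℂ)` endowed with the topology of
uniform convergence on the members of `𝓕`: the set of nonzero multiplicative linear
functionals `χ : C(X, ℂ) → ℂ` that are continuous for that topology, i.e. dominated by
`r · max(p_{F₁}, …, p_{F_l})` for finitely many `F₁, …, F_l ∈ 𝓕` and some `r > 0`.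
It carries the weak-* (pointwise convergence) topology as a subset of the product
`C(X, ℂ) → ℂ`. -/
noncomputable def characterSpace𝓕 (X : Type*) [TopologicalSpace X] (𝓕 : Set (Set X)) :
    Set (C(X, ℂ) → ℂ) :=
  {χ | χ ≠ 0 ∧
    (∀ f g : C(X, ℂ), χ (f + g) = χ f + χ g) ∧
    (∀ (c : ℂ) (f : C(X, ℂ)), χ (c • f) = c * χ f) ∧
    (∀ f g : C(X, ℂ), χ (f * g) = χ f * χ g) ∧
    ∃ (S : Finset (Set X)) (r : ℝ), ↑S ⊆ 𝓕 ∧ 0 < r ∧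
      ∀ f : C(X, ℂ), ‖χ f‖ ≤ r * ⨆ F ∈ (S : Set (Set X)), supSeminorm F f}

open Set Topology

lemma Real.le_biSup {ι : Type*} {g : ι → ℝ} {s : Set ι} (hg : BddAbove (g '' s)) {i : ι}
    (hi : i ∈ s) : g i ≤ ⨆ j ∈ s, g j :=
  le_ciSup₂ (f := fun j (_ : j ∈ s) => g j)
    (hg.mono <| iUnion_subset fun _ => range_subset_iff.2 fun hj => mem_image_of_mem g hj) i hi

lemma Real.biSup_le {ι : Type*} {g : ι → ℝ} {s : Set ι} {a : ℝ} (ha : 0 ≤ a)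
    (hg : ∀ i ∈ s, g i ≤ a) : ⨆ i ∈ s, g i ≤ a :=
  Real.iSup_le (fun i => Real.iSup_le (hg i) ha) ha

section Separation

variable {X 𝕜 : Type*} [TopologicalSpace X] [RCLike 𝕜]

lemma CompletelyRegularSpace.exists_continuousMap_eq_zero_eqOn_one [CompletelyRegularSpace X]
    {x : X} {K : Set X} (hK : IsClosed K) (hx : x ∉ K) :
    ∃ f : C(X, 𝕜), f x = 0 ∧ EqOn f 1 K := by
  obtain ⟨f, hf, hfx, hfK⟩ := CompletelyRegularSpace.completely_regular x K hK hx
  refine ⟨⟨fun y => ((f y : ℝ) : 𝕜), by fun_prop⟩, by simp [hfx], fun y hy => ?_⟩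
  simp [show f y = 1 from hfK hy]

variable (X 𝕜) in
lemma isInducing_continuousMap_eval [CompletelyRegularSpace X] :
    IsInducing (fun x (f : C(X, 𝕜)) => f x) := by
  have hcont : Continuous (fun x (f : C(X, 𝕜)) => f x) := continuous_pi fun f => f.continuous
  refine isInducing_iff_nhds.2 fun x => le_antisymm (hcont.tendsto x).le_comap fun U hU => ?_
  obtain ⟨V, hVU, hV, hxV⟩ := mem_nhds_iff.1 hU
  obtain ⟨f, hfx, hf⟩ := CompletelyRegularSpace.exists_continuousMap_eq_zero_eqOn_one (𝕜 := 𝕜)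
    hV.isClosed_compl (not_not_intro hxV)
  have hW : IsOpen {ψ : C(X, 𝕜) → 𝕜 | ‖ψ f‖ < 1} :=
    isOpen_lt (continuous_apply f).norm continuous_const
  refine Filter.mem_comap.2 ⟨_, hW.mem_nhds (by simp [hfx]), fun y hy => hVU ?_⟩
  by_contra hyV
  simp [hf hyV] at hy

variable (X 𝕜) in
lemma isEmbedding_continuousMap_eval [T1Space X] [CompletelyRegularSpace X] :
    IsEmbedding (fun x (f : C(X, 𝕜)) => f x) := by
  refine ⟨isInducing_continuousMap_eval X 𝕜, fun x y hxy => by_contra fun hne => ?_⟩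
  obtain ⟨f, hfx, hfy⟩ := CompletelyRegularSpace.exists_continuousMap_eq_zero_eqOn_one (𝕜 := 𝕜)
    isClosed_singleton (mem_singleton_iff.not.2 hne)
  simpa [hfx, hfy rfl] using congrFun hxy f

end Separation

section Characters

variable {X 𝕜 : Type*} [TopologicalSpace X] [RCLike 𝕜]

lemma IsCompact.exists_continuousMap_mul_eqOn_one {K : Set X} (hK : IsCompact K) {G : C(X, ℝ)}
    (hG : ∀ y ∈ K, 0 < G y) : ∃ v : C(X, ℝ), ∀ y ∈ K, v y * G y = 1 := by
  obtain ⟨ε, hε, hεG⟩ := hK.exists_forall_le' G.continuous.continuousOn hG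
  refine ⟨⟨fun y => (max (G y) ε)⁻¹,
    (G.continuous.max continuous_const).inv₀ fun y => (lt_max_of_lt_right hε).ne'⟩, fun y hy => ?_⟩
  simp [max_eq_left (hεG y hy), (hG y hy).ne']

lemma ContinuousMap.exists_mem_ideal_eqOn_one (I : Ideal C(X, 𝕜)) {K : Set X} (hK : IsCompact K)
    (hI : ∀ x ∈ K, ∃ f ∈ I, f x ≠ 0) : ∃ g ∈ I, EqOn g 1 K := by
  choose! f hfI hfx using hI
  obtain ⟨t, htK, hcover⟩ := hK.elim_nhds_subcover (fun x => {y | f x y ≠ 0})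
    fun x hx => (isOpen_ne_fun (f x).continuous continuous_const).mem_nhds (hfx x hx)
  let G : C(X, ℝ) := ⟨fun y => ∑ x ∈ t, ‖f x y‖ ^ 2, by fun_prop⟩
  have hG : ∀ y ∈ K, 0 < G y := fun y hy => by
    obtain ⟨x, hxt, hxy : f x y ≠ 0⟩ := mem_iUnion₂.1 (hcover hy)
    exact Finset.sum_pos' (fun _ _ => by positivity) ⟨x, hxt, by positivity⟩
  obtain ⟨v, hv⟩ := hK.exists_continuousMap_mul_eqOn_one hG
  refine ⟨⟨fun y => (v y : 𝕜), by fun_prop⟩ * ∑ x ∈ t, star (f x) * f x,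
    I.mul_mem_left _ (I.sum_mem fun x hx => I.mul_mem_left _ (hfI x (htK x hx))), fun y hy => ?_⟩
  have hvG : ((v y * G y : ℝ) : 𝕜) = 1 := by rw [hv y hy, RCLike.ofReal_one]
  simpa [G, RCLike.conj_mul] using hvG

lemma ContinuousMap.exists_mem_eq_eval_of_eqOn_zero (φ : C(X, 𝕜) →ₐ[𝕜] 𝕜) {K : Set X}
    (hK : IsCompact K) (hφ : ∀ f : C(X, 𝕜), EqOn f 0 K → φ f = 0) :
    ∃ x ∈ K, ∀ f, φ f = f x := by
  by_contra! h
  obtain ⟨g, hg, hgK⟩ := exists_mem_ideal_eqOn_one (RingHom.ker φ) hK fun x hx => by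
    obtain ⟨f, hf⟩ := h x hx
    exact ⟨f - algebraMap 𝕜 _ (φ f), by simp, by simpa [sub_eq_zero] using hf.symm⟩
  have hg1 := hφ (g - 1) fun y hy => by simpa [sub_eq_zero] using hgK hy
  simp [RingHom.mem_ker.1 hg] at hg1

end Characters

namespace characterSpace𝓕

variable {X : Type*} [TopologicalSpace X] {𝓕 : Set (Set X)} {χ : C(X, ℂ) → ℂ}

lemma apply_one (hχ : χ ∈ characterSpace𝓕 X 𝓕) : χ 1 = 1 := by
  obtain ⟨f, hf⟩ := Function.ne_iff.1 hχ.1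
  exact mul_left_cancel₀ hf (by simpa using (hχ.2.2.2.1 f 1).symm)

noncomputable def toAlgHom (hχ : χ ∈ characterSpace𝓕 X 𝓕) : C(X, ℂ) →ₐ[ℂ] ℂ :=
  AlgHom.ofLinearMap ⟨⟨χ, hχ.2.1⟩, hχ.2.2.1⟩ (apply_one hχ) hχ.2.2.2.1

lemma exists_isCompact_apply_eq_zero (hcomp : ∀ F ∈ 𝓕, IsCompact F)
    (hχ : χ ∈ characterSpace𝓕 X 𝓕) :
    ∃ K, IsCompact K ∧ ∀ f : C(X, ℂ), EqOn f 0 K → χ f = 0 := by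
  obtain ⟨-, -, -, -, S, r, hS, hr, hbound⟩ := hχ
  refine ⟨⋃₀ S, S.finite_toSet.isCompact_sUnion fun F hF => hcomp F (hS hF), fun f hf => ?_⟩
  have hsup : ⨆ F ∈ (S : Set (Set X)), supSeminorm F f ≤ 0 :=
    Real.biSup_le le_rfl fun F hF =>
      Real.biSup_le le_rfl fun y hy => by simp [hf (mem_sUnion_of_mem hy hF)]
  simpa using (hbound f).trans (mul_nonpos_of_nonneg_of_nonpos hr.le hsup)

lemma exists_eq_eval (hcomp : ∀ F ∈ 𝓕, IsCompact F) (hχ : χ ∈ characterSpace𝓕 X 𝓕) :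
    ∃ x : X, ∀ f, χ f = f x := by
  obtain ⟨K, hK, hχK⟩ := exists_isCompact_apply_eq_zero hcomp hχ
  obtain ⟨x, -, hx⟩ := ContinuousMap.exists_mem_eq_eval_of_eqOn_zero (toAlgHom hχ) hK hχK
  exact ⟨x, hx⟩

lemma eval_mem (hcomp : ∀ F ∈ 𝓕, IsCompact F) (hcover : ⋃₀ 𝓕 = univ) (x : X) :
    (fun f : C(X, ℂ) => f x) ∈ characterSpace𝓕 X 𝓕 := by
  obtain ⟨F, hF, hxF⟩ := sUnion_eq_univ_iff.1 hcover x
  refine ⟨fun h => by simpa using congrFun h 1, fun _ _ => rfl, fun _ _ => rfl, fun _ _ => rfl,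
    {F}, 1, by simpa using hF, one_pos, fun f => ?_⟩
  show ‖f x‖ ≤ 1 * _
  rw [one_mul]
  calc ‖f x‖ ≤ supSeminorm F f :=
        Real.le_biSup ((hcomp F hF).image_of_continuousOn f.continuous.norm.continuousOn).bddAbove
          hxF
    _ ≤ _ := Real.le_biSup (g := (supSeminorm · f)) (by simp) (by simp)

end characterSpace𝓕

theorem stmt15_general {X : Type*} [TopologicalSpace X] [T2Space X] [CompletelyRegularSpace X]
    (𝓕 : Set (Set X)) (hcomp : ∀ F ∈ 𝓕, IsCompact F) (hcover : ⋃₀ 𝓕 = Set.univ) :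
    ∃ hmem : ∀ x : X, (fun f : C(X, ℂ) => f x) ∈ characterSpace𝓕 X 𝓕,
      IsHomeomorph (fun x : X =>
        (⟨fun f : C(X, ℂ) => f x, hmem x⟩ : characterSpace𝓕 X 𝓕)) := by
  refine ⟨characterSpace𝓕.eval_mem hcomp hcover, isHomeomorph_iff_isEmbedding_surjective.2
    ⟨(isEmbedding_continuousMap_eval X ℂ).codRestrict _ _, fun χ => ?_⟩⟩
  obtain ⟨x, hx⟩ := characterSpace𝓕.exists_eq_eval hcomp χ.2
  exact ⟨x, Subtype.ext (funext fun f => (hx f).symm)⟩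

/-- Let `X` be a Tychonoff space and `𝓕` a strongly functionally
generating family of compact subsets covering `X`.  Equip `C(X, ℂ)` with the topology of
uniform convergence on members of `𝓕` (with continuity of functionals expressed via
domination by the seminorms `p_F`, `F ∈ 𝓕`).  Then evaluation
`x ↦ (f ↦ f x)` is a homeomorphism from `X` onto the character space
`Δ(C_𝓕(X))` with the weak-* (pointwise convergence) topology. -/
theorem stmt15 {X : Type*} [TopologicalSpace X] [T2Space X] [CompletelyRegularSpace X]
    (𝓕 : Set (Set X)) (hcomp : ∀ F ∈ 𝓕, IsCompact F) (hcover : ⋃₀ 𝓕 = Set.univ)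
    (hgen : ∀ f : X → ℝ, (∀ F ∈ 𝓕, ContinuousOn f F) → Continuous f) :
    ∃ hmem : ∀ x : X, (fun f : C(X, ℂ) => f x) ∈ characterSpace𝓕 X 𝓕,
      IsHomeomorph (fun x : X =>
        (⟨fun f : C(X, ℂ) => f x, hmem x⟩ : characterSpace𝓕 X 𝓕)) :=
  stmt15_general 𝓕 hcomp hcover
end

section
/- Let X be a Tychonoff (completely regular Hausdorff) topological space and let 𝓕 be a family of compact subsets of X with ⋃𝓕 = X. Equip C(X, ℂ) with the topology of uniform convergence on the members of 𝓕, given by the seminorms p_F(f) = sup_{x ∈ F}|f(x)| for F ∈ 𝓕. If G is a compact subset of X such that the seminorm p_G(f) = sup_{x ∈ G}|f(x)| is continuous on C(X,ℂ) in this topology — equivalently, there exist F₁, …, F_l ∈ 𝓕 and a constant r > 0 with p_G(f) ≤ r · max{p_{F₁}(f), …, p_{F_l}(f)} for all f ∈ C(X,ℂ) — then G ⊆ F₁ ∪ ⋯ ∪ F_l. -/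
/-- Let `X` be a Tychonoff space and `𝓕` a family of compact subsets
with `⋃ 𝓕 = X`.  If `G ⊆ X` is compact and the seminorm `p_G` is continuous on `C(X, ℂ)`
in the topology of uniform convergence on members of `𝓕` — i.e. there are
`F₁, …, F_l ∈ 𝓕` and `r > 0` with `p_G(f) ≤ r * max{p_{F₁}(f), …, p_{F_l}(f)}` for all
`f` — then `G ⊆ F₁ ∪ ⋯ ∪ F_l`. -/
theorem stmt16 {X : Type*} [TopologicalSpace X] [T2Space X] [CompletelyRegularSpace X]
    (𝓕 : Set (Set X)) (hcomp : ∀ F ∈ 𝓕, IsCompact F) (hcover : ⋃₀ 𝓕 = Set.univ)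
    (G : Set X) (hG : IsCompact G)
    (l : ℕ) (F : Fin l → Set X) (hF : ∀ i, F i ∈ 𝓕) (r : ℝ) (hr : 0 < r)
    (hbound : ∀ f : C(X, ℂ), supSeminorm G f ≤ r * ⨆ i : Fin l, supSeminorm (F i) f) :
    G ⊆ ⋃ i : Fin l, F i := by
  intro x hxG
  by_contra hx
  -- the finite union of compact sets is closed
  have hKclosed : IsClosed (⋃ i : Fin l, F i) := by
    exact isClosed_iUnion_of_finite fun i => (hcomp (F i) (hF i)).isClosed
  obtain ⟨f, hfc, hfx, hfK⟩ :=
    CompletelyRegularSpace.completely_regular x (⋃ i : Fin l, F i) hKclosed hx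
  -- h = 1 - f, as a complex-valued continuous map
  set h : C(X, ℂ) := ⟨fun y => ((1 - (f y : ℝ) : ℝ) : ℂ), by
    exact Complex.continuous_ofReal.comp
      (continuous_const.sub (continuous_induced_dom.comp hfc))⟩ with hh
  have hnorm : ∀ y, ‖h y‖ ≤ 1 := by
    intro y
    have h1 : (0 : ℝ) ≤ (f y : ℝ) := (f y).2.1
    have h2 : (f y : ℝ) ≤ 1 := (f y).2.2
    have he : ‖h y‖ = |1 - (f y : ℝ)| := by
      show ‖((1 - (f y : ℝ) : ℝ) : ℂ)‖ = _
      rw [Complex.norm_real, Real.norm_eq_abs]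
    rw [he, abs_of_nonneg (by linarith)]
    linarith
  have hhx : ‖h x‖ = 1 := by
    simp [hh, hfx]
  have hzero : ∀ i : Fin l, ∀ y ∈ F i, h y = 0 := by
    intro i y hy
    have : f y = 1 := hfK (Set.mem_iUnion.2 ⟨i, hy⟩)
    simp [hh, this]
  -- left side ≥ 1
  have hle : (1 : ℝ) ≤ supSeminorm G h := by
    rw [← hhx]
    have hb : BddAbove (Set.range fun y => ⨆ _ : y ∈ G, ‖h y‖) := by
      refine ⟨1, ?_⟩
      rintro v ⟨y, rfl⟩
      exact Real.iSup_le (fun _ => hnorm y) zero_le_one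
    have := le_ciSup hb x
    rwa [ciSup_pos hxG] at this
  -- right side = 0
  have hrzero : (⨆ i : Fin l, supSeminorm (F i) h) ≤ 0 := by
    refine Real.iSup_le (fun i => ?_) le_rfl
    refine Real.iSup_le (fun y => ?_) le_rfl
    refine Real.iSup_le (fun hy => ?_) le_rfl
    rw [hzero i y hy]; simp
  have := hbound h
  have : supSeminorm G h ≤ 0 := le_trans this (by nlinarith)
  linarith
end
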